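/- For m ∈ (0, (π/(2T))²) and T > 0, the function G_m(t,s) = (cos(√m s) csc(√m T) cos(√m (t−T)) + sinh(√m s) csch(√m T) sinh(√m (t−T)))/(2√m) is strictly positive on the triangle {(t,s) : -t ≤ s ≤ t, 0 ≤ t ≤ T}. -/

import Mathlib

open Real

/-- `sinh b ≤ b * cosh b` for `b ≥ 0`. -/
lemma sinh_le_mul_cosh {b : ℝ} (hb : 0 ≤ b) : Real.sinh b ≤ b * Real.cosh b := by
  have h : MonotoneOn (fun x : ℝ => x * Real.cosh x - Real.sinh x) (Set.Ici 0) := by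
    apply monotoneOn_of_deriv_nonneg (convex_Ici 0)
    · fun_prop
    · intro x hx
      exact (((differentiable_id.mul Real.differentiable_cosh).sub
        Real.differentiable_sinh) x).differentiableWithinAt
    · intro x hx
      simp only [Set.mem_Ioi, interior_Ici] at hx
      have : deriv (fun x : ℝ => x * Real.cosh x - Real.sinh x) x = x * Real.sinh x := by
        have hd : HasDerivAt (fun x : ℝ => x * Real.cosh x - Real.sinh x) _ x :=
          ((hasDerivAt_id x).mul (Real.hasDerivAt_cosh x)).sub (Real.hasDerivAt_sinh x)
        rw [hd.deriv]
        simp [Real.deriv_cosh, Real.deriv_sinh]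
        try ring
      rw [this]
      exact mul_nonneg hx.le (Real.sinh_nonneg_iff.mpr hx.le)
  have := h (Set.self_mem_Ici) hb hb
  simpa using this

/-- `sinh b * cos b ≤ sin b * cosh b` for `0 ≤ b < π/2`. -/
lemma sinh_mul_cos_le {b : ℝ} (hb : 0 ≤ b) (hb2 : b < Real.pi / 2) :
    Real.sinh b * Real.cos b ≤ Real.sin b * Real.cosh b := by
  rcases eq_or_lt_of_le hb with rfl | hb'
  · simp
  · have hcos : 0 < Real.cos b := Real.cos_pos_of_mem_Ioo ⟨by linarith [Real.pi_pos], hb2⟩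
    have htan := Real.lt_tan hb' hb2
    rw [Real.tan_eq_sin_div_cos, lt_div_iff₀ hcos] at htan
    have h1 : Real.sinh b ≤ b * Real.cosh b := sinh_le_mul_cosh hb
    have hch : 0 < Real.cosh b := Real.cosh_pos b
    nlinarith [Real.cosh_pos b]

/-- `cos a * cosh b - sin a * sinh b > 0` when `0 ≤ a`, `0 ≤ b`, `a + b < π/2`. -/
lemma P_pos {a b : ℝ} (ha : 0 ≤ a) (hb : 0 ≤ b) (hab : a + b < Real.pi / 2) :
    0 < Real.cos a * Real.cosh b - Real.sin a * Real.sinh b := by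
  have hcosb : 0 < Real.cos b := Real.cos_pos_of_mem_Ioo ⟨by nlinarith [Real.pi_pos], by linarith⟩
  have hcosab : 0 < Real.cos (a + b) :=
    Real.cos_pos_of_mem_Ioo ⟨by nlinarith [Real.pi_pos], hab⟩
  have hsina : 0 ≤ Real.sin a := Real.sin_nonneg_of_nonneg_of_le_pi ha
    (by nlinarith [Real.pi_pos])
  have h1 : Real.sinh b * Real.cos b ≤ Real.sin b * Real.cosh b :=
    sinh_mul_cos_le hb (by linarith)
  have hkey : (Real.cos a * Real.cosh b - Real.sin a * Real.sinh b) * Real.cos b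
      ≥ Real.cosh b * Real.cos (a + b) := by
    rw [Real.cos_add]
    nlinarith
  nlinarith [Real.cosh_pos b]

/-- Main inequality: `cos a * cos b * sinh (a+b) - sinh a * sinh b * sin (a+b) > 0`
for `0 ≤ a`, `0 ≤ b`, `0 < a + b < π/2`. -/
lemma main_ineq {a b : ℝ} (ha : 0 ≤ a) (hb : 0 ≤ b) (hab0 : 0 < a + b)
    (hab : a + b < Real.pi / 2) :
    0 < Real.cos a * Real.cos b * Real.sinh (a + b)
      - Real.sinh a * Real.sinh b * Real.sin (a + b) := by
  have hPab := P_pos ha hb hab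
  have hPba := P_pos hb ha (by linarith)
  have hcosa : 0 < Real.cos a := Real.cos_pos_of_mem_Ioo ⟨by nlinarith [Real.pi_pos], by linarith⟩
  have hcosb : 0 < Real.cos b := Real.cos_pos_of_mem_Ioo ⟨by nlinarith [Real.pi_pos], by linarith⟩
  have hsa : 0 ≤ Real.sinh a := Real.sinh_nonneg_iff.mpr ha
  have hsb : 0 ≤ Real.sinh b := Real.sinh_nonneg_iff.mpr hb
  have hexp : Real.cos a * Real.cos b * Real.sinh (a + b)
      - Real.sinh a * Real.sinh b * Real.sin (a + b)
      = Real.cos b * Real.sinh a * (Real.cos a * Real.cosh b - Real.sin a * Real.sinh b)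
      + Real.cos a * Real.sinh b * (Real.cos b * Real.cosh a - Real.sin b * Real.sinh a) := by
    rw [Real.sinh_add, Real.sin_add]; ring
  rw [hexp]
  rcases lt_or_eq_of_le ha with ha' | ha'
  · have : 0 < Real.sinh a := Real.sinh_pos_iff.mpr ha'
    have h1 : 0 < Real.cos b * Real.sinh a * (Real.cos a * Real.cosh b - Real.sin a * Real.sinh b) :=
      mul_pos (mul_pos hcosb this) hPab
    nlinarith [mul_nonneg (mul_nonneg hcosa.le hsb) hPba.le]
  · have hb' : 0 < b := by linarith
    have : 0 < Real.sinh b := Real.sinh_pos_iff.mpr hb'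
    have h2 : 0 < Real.cos a * Real.sinh b * (Real.cos b * Real.cosh a - Real.sin b * Real.sinh a) :=
      mul_pos (mul_pos hcosa this) hPba
    nlinarith [mul_nonneg (mul_nonneg hcosb.le hsa) hPab.le]

/-- Explicit expression of the Green's function `G_m` (for `m > 0`) on the
triangle `{(t,s) : -t ≤ s ≤ t}`. -/
noncomputable def gpos (m T t s : ℝ) : ℝ :=
  (Real.cos (Real.sqrt m * s) * (1 / Real.sin (Real.sqrt m * T)) *
      Real.cos (Real.sqrt m * (t - T)) +
    Real.sinh (Real.sqrt m * s) * (1 / Real.sinh (Real.sqrt m * T)) *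
      Real.sinh (Real.sqrt m * (t - T))) / (2 * Real.sqrt m)

theorem stmt9 (m T : ℝ) (hT : 0 < T) (hm : 0 < m)
    (hm2 : m < (Real.pi / (2 * T)) ^ 2) :
    ∀ t s : ℝ, -t ≤ s → s ≤ t → t ≤ T → 0 < gpos m T t s := by
  intro t s hst hts htT
  set k := Real.sqrt m with hk
  have hk0 : 0 < k := Real.sqrt_pos.mpr hm
  have hkT : k * T < Real.pi / 2 := by
    have h2T : 0 < 2 * T := by linarith
    have hπ : 0 < Real.pi / (2 * T) := div_pos Real.pi_pos h2T
    have : k < Real.pi / (2 * T) := by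
      rw [hk]
      have := Real.sqrt_lt_sqrt hm.le hm2
      rwa [Real.sqrt_sq hπ.le] at this
    calc k * T < Real.pi / (2 * T) * T := by
          exact mul_lt_mul_of_pos_right this hT
      _ = Real.pi / 2 := by field_simp
  have ht0 : 0 ≤ t := by linarith
  -- set a = k*t, b = k*(T - t)
  set a := k * t with hadef
  set b := k * (T - t) with hbdef
  have ha : 0 ≤ a := mul_nonneg hk0.le ht0
  have hb : 0 ≤ b := mul_nonneg hk0.le (by linarith)
  have habeq : a + b = k * T := by rw [hadef, hbdef]; ring
  have hab : a + b < Real.pi / 2 := by rw [habeq]; exact hkT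
  have hab0 : 0 < a + b := by rw [habeq]; positivity
  have hS : 0 < Real.sin (k * T) := by
    apply Real.sin_pos_of_pos_of_lt_pi (by positivity)
    linarith [Real.pi_pos, hkT]
  have hH : 0 < Real.sinh (k * T) := Real.sinh_pos_iff.mpr (by positivity)
  -- rewrite the endpoint factors
  have hcostT : Real.cos (k * (t - T)) = Real.cos b := by
    rw [← Real.cos_neg]; ring_nf; rw [hbdef]; ring_nf
  have hsinhtT : Real.sinh (k * (t - T)) = - Real.sinh b := by
    rw [← Real.sinh_neg]; ring_nf; rw [hbdef]; ring_nf
  -- bounds on the s-dependent factors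
  have hks : |k * s| ≤ a := by
    rw [abs_mul, abs_of_pos hk0, hadef]
    apply mul_le_mul_of_nonneg_left _ hk0.le
    rw [abs_le]; constructor <;> linarith
  have hcoss : Real.cos a ≤ Real.cos (k * s) := by
    rw [← Real.cos_abs (k * s)]
    apply Real.cos_le_cos_of_nonneg_of_le_pi (abs_nonneg _) _ hks
    nlinarith [Real.pi_pos]
  have hsinhs : Real.sinh (k * s) ≤ Real.sinh a := by
    apply Real.sinh_le_sinh.mpr
    rw [hadef]
    exact mul_le_mul_of_nonneg_left hts hk0.le
  have hcosb : 0 < Real.cos b :=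
    Real.cos_pos_of_mem_Ioo ⟨by nlinarith [Real.pi_pos], by linarith⟩
  have hsb : 0 ≤ Real.sinh b := Real.sinh_nonneg_iff.mpr hb
  -- main estimate
  have hmain := main_ineq ha hb hab0 hab
  rw [habeq] at hmain
  have hN : 0 < Real.cos (k * s) * Real.cos (k * (t - T)) * Real.sinh (k * T)
      + Real.sinh (k * s) * Real.sinh (k * (t - T)) * Real.sin (k * T) := by
    rw [hcostT, hsinhtT]
    have h1 : Real.cos a * Real.cos b * Real.sinh (k * T)
        ≤ Real.cos (k * s) * Real.cos b * Real.sinh (k * T) := by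
      apply mul_le_mul_of_nonneg_right _ hH.le
      exact mul_le_mul_of_nonneg_right hcoss hcosb.le
    have h2 : Real.sinh (k * s) * Real.sinh b * Real.sin (k * T)
        ≤ Real.sinh a * Real.sinh b * Real.sin (k * T) := by
      apply mul_le_mul_of_nonneg_right _ hS.le
      exact mul_le_mul_of_nonneg_right hsinhs hsb
    nlinarith
  -- conclude
  unfold gpos
  rw [← hk]
  apply div_pos _ (by positivity)
  have key : Real.cos (k * s) * (1 / Real.sin (k * T)) * Real.cos (k * (t - T)) +
      Real.sinh (k * s) * (1 / Real.sinh (k * T)) * Real.sinh (k * (t - T))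
      = (Real.cos (k * s) * Real.cos (k * (t - T)) * Real.sinh (k * T)
        + Real.sinh (k * s) * Real.sinh (k * (t - T)) * Real.sin (k * T))
        / (Real.sin (k * T) * Real.sinh (k * T)) := by
    field_simp
    try ring
  rw [key]
  exact div_pos hN (by positivity)
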